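/- arXiv:2211.03765 — 2 statements merged into one kernel-verified Lean document; each statement's English description precedes it below -/
import Mathlib

section
/- Let Γ be an abstract simplicial complex on [m], let r be a positive integer, and take r_1 = ⋯ = r_m = r. Then rank(A_Γ) = E_0 + E_1 r + E_2 r^2 + ⋯ + E_d r^d, where d = dim(Γ) + 1 and E_k = ∑_{i=k}^{d} (−1)^{i−k} f_{i−1} \binom{i}{k}. -/
open Finset

/-- An abstract simplicial complex on `[m]`: contains the empty set and all
singletons, and is closed under taking subsets. -/
def IsSimplicialComplex {m : ℕ} (Γ : Finset (Finset (Fin m))) : Prop :=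
  ∅ ∈ Γ ∧ (∀ i : Fin m, ({i} : Finset (Fin m)) ∈ Γ) ∧ ∀ F ∈ Γ, ∀ G, G ⊆ F → G ∈ Γ

/-- A facet is a maximal face. -/
def IsFacet {m : ℕ} (Γ : Finset (Finset (Fin m))) (F : Finset (Fin m)) : Prop :=
  F ∈ Γ ∧ ∀ G ∈ Γ, F ⊆ G → G = F

instance {m : ℕ} (Γ : Finset (Finset (Fin m))) : DecidablePred (IsFacet Γ) := fun F =>
  decidable_of_iff (F ∈ Γ ∧ ∀ G ∈ Γ, F ⊆ G → G = F) Iff.rfl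

/-- The 0/1 matrix of the hierarchical log-linear model: rows indexed by pairs
`(F, j)` with `F` a facet of `Γ` and `j` a tuple of states for the coordinates
in `F`; columns indexed by tuples `i` of states of all `m` variables; the entry
is `1` iff the restriction of `i` to `F` is `j`. -/
def hierMatrix {m : ℕ} (Γ : Finset (Finset (Fin m))) (r : Fin m → ℕ) :
    Matrix (Σ F : {F : Finset (Fin m) // IsFacet Γ F}, (∀ f : (F.val : Finset (Fin m)), Fin (r f)))
      (∀ i : Fin m, Fin (r i)) ℚ :=
  fun row col => if (∀ f : (row.1.val : Finset (Fin m)), row.2 f = col f) then 1 else 0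

section Aux
open Matrix

variable (r : ℕ) [NeZero r]

/-- basis of ℚ^(Fin r): row 0 is all-ones, row k (k ≠ 0) is the indicator of k. -/
def uu (k x : Fin r) : ℚ := if k = 0 then 1 else if x = k then 1 else 0

/-- the dual family. -/
def vv (k x : Fin r) : ℚ :=
  (if x = k then (1:ℚ) else 0) - (if k = 0 then 0 else if x = 0 then 1 else 0)

lemma uv_orth (k k' : Fin r) : ∑ x, uu r k x * vv r k' x = if k = k' then 1 else 0 := by
  by_cases hk : k = 0
  · subst hk
    simp only [uu, if_pos rfl, one_mul, vv, Finset.sum_sub_distrib, Finset.sum_ite_eq',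
      Finset.mem_univ, if_true]
    by_cases hk' : k' = 0 <;> simp [hk', eq_comm]
  · have h1 : ∀ x, uu r k x * vv r k' x = if x = k then vv r k' x else 0 := by
      intro x; simp [uu, hk, ite_mul]
    rw [Finset.sum_congr rfl fun x _ => h1 x, Finset.sum_ite_eq']
    simp only [Finset.mem_univ, if_true, vv]
    by_cases hkk : k = k'
    · subst hkk; simp [hk]
    · simp [hkk, hk, Ne.symm hkk]

lemma dual_expand (j x : Fin r) :
    (if j = x then (1:ℚ) else 0) = ∑ k, vv r k j * uu r k x := by
  have hUV : (Matrix.of (uu r)) * (Matrix.of (vv r))ᵀ = 1 := by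
    ext k k'
    simp only [Matrix.mul_apply, Matrix.transpose_apply, Matrix.of_apply, Matrix.one_apply]
    exact uv_orth r k k'
  have hVU : (Matrix.of (vv r))ᵀ * (Matrix.of (uu r)) = 1 := mul_eq_one_comm.mp hUV
  have h := Matrix.ext_iff.mpr hVU j x
  simpa [Matrix.mul_apply, Matrix.one_apply] using h.symm

variable (m : ℕ)

/-- tensor-product family indexed by `s : Fin m → Fin r`. -/
def BB (s : Fin m → Fin r) : (Fin m → Fin r) → ℚ := fun x => ∏ f, uu r (s f) (x f)

def VV (t : Fin m → Fin r) : (Fin m → Fin r) → ℚ := fun x => ∏ f, vv r (t f) (x f)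

lemma orthB (s t : Fin m → Fin r) :
    ∑ x : Fin m → Fin r, BB r m s x * VV r m t x = if s = t then 1 else 0 := by
  have h1 : ∀ x : Fin m → Fin r, BB r m s x * VV r m t x
      = ∏ f, (uu r (s f) (x f) * vv r (t f) (x f)) := by
    intro x; rw [BB, VV, ← Finset.prod_mul_distrib]
  rw [Finset.sum_congr rfl fun x _ => h1 x]
  have h3 := Finset.prod_univ_sum (fun _ : Fin m => (univ : Finset (Fin r)))
    (fun f y => uu r (s f) y * vv r (t f) y)
  rw [Fintype.piFinset_univ] at h3
  rw [← h3]
  have h2 : ∀ f : Fin m, ∑ y, uu r (s f) y * vv r (t f) y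
      = if s f = t f then (1:ℚ) else 0 := fun f => uv_orth r (s f) (t f)
  rw [Finset.prod_congr rfl fun f _ => h2 f, Finset.prod_boole]
  simp [funext_iff]

lemma linIndepB : LinearIndependent ℚ (BB r m) := by
  rw [Fintype.linearIndependent_iff]
  intro g hg t
  have hpt : ∀ x : Fin m → Fin r, ∑ s, g s * BB r m s x = 0 := by
    intro x
    have := congrFun hg x
    simpa using this
  calc g t = ∑ s, g s * (if s = t then 1 else 0) := by
        simp only [mul_ite, mul_one, mul_zero, Finset.sum_ite_eq', Finset.mem_univ, if_true]
    _ = ∑ s, g s * ∑ x, BB r m s x * VV r m t x := by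
        refine Finset.sum_congr rfl fun s _ => ?_
        rw [orthB]
    _ = ∑ s, ∑ x, g s * BB r m s x * VV r m t x := by
        refine Finset.sum_congr rfl fun s _ => ?_
        rw [Finset.mul_sum]; exact Finset.sum_congr rfl fun x _ => (mul_assoc _ _ _).symm
    _ = ∑ x, (∑ s, g s * BB r m s x) * VV r m t x := by
        rw [Finset.sum_comm]
        exact Finset.sum_congr rfl fun x _ => (Finset.sum_mul _ _ _).symm
    _ = 0 := by simp [fun x => hpt x]

/-- support of a tuple. -/
def supp (s : Fin m → Fin r) : Finset (Fin m) := univ.filter (fun f => s f ≠ 0)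

lemma prod_over_facet (F : Finset (Fin m)) (w : Fin m → Fin r) (x : Fin m → Fin r)
    (hw : ∀ f, f ∉ F → w f = 0) :
    BB r m w x = ∏ f : ↥F, uu r (w f.1) (x f.1) := by
  rw [BB, ← Finset.prod_subset F.subset_univ
    (fun f _ hf => by rw [hw f hf]; simp [uu]), Finset.univ_eq_attach]
  exact (Finset.prod_attach F fun a => uu r (w a) (x a)).symm

lemma row_mem_span (Γ : Finset (Finset (Fin m))) (hΓ : IsSimplicialComplex Γ)
    (idx : Σ F : {F : Finset (Fin m) // IsFacet Γ F},
      (∀ f : (F.val : Finset (Fin m)), Fin ((fun _ => r) f))) :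
    hierMatrix Γ (fun _ => r) idx
      ∈ Submodule.span ℚ (BB r m '' {s | supp r m s ∈ Γ}) := by
  obtain ⟨⟨F, hF⟩, j⟩ := idx
  set ext : (↥F → Fin r) → (Fin m → Fin r) :=
    fun s f => if h : f ∈ F then s ⟨f, h⟩ else 0 with hext
  have hextF : ∀ s f, f ∉ F → ext s f = 0 := fun s f hf => dif_neg hf
  have key : hierMatrix Γ (fun _ => r) ⟨⟨F, hF⟩, j⟩
      = ∑ s : (↥F → Fin r), (∏ f : ↥F, vv r (s f) (j f)) • BB r m (ext s) := by
    funext x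
    have h3 := Finset.prod_univ_sum (fun _ : ↥F => (univ : Finset (Fin r)))
      (fun f k => vv r k (j f) * uu r k (x f.1))
    rw [Fintype.piFinset_univ] at h3
    calc hierMatrix Γ (fun _ => r) ⟨⟨F, hF⟩, j⟩ x
        = ∏ f : ↥F, if j f = x f.1 then (1:ℚ) else 0 := by
          rw [Finset.prod_boole]; simp [hierMatrix]
      _ = ∏ f : ↥F, ∑ k, vv r k (j f) * uu r k (x f.1) :=
          Finset.prod_congr rfl fun f _ => dual_expand r (j f) (x f.1)
      _ = ∑ s : (↥F → Fin r), ∏ f : ↥F, vv r (s f) (j f) * uu r (s f) (x f.1) := h3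
      _ = ∑ s : (↥F → Fin r), (∏ f : ↥F, vv r (s f) (j f)) • BB r m (ext s) x := by
          refine Finset.sum_congr rfl fun s _ => ?_
          rw [Finset.prod_mul_distrib, smul_eq_mul]
          congr 1
          have := prod_over_facet r m F (ext s) x (hextF s)
          rw [this]
          exact Finset.prod_congr rfl fun f _ => by rw [hext]; simp [f.2]
      _ = (∑ s : (↥F → Fin r), (∏ f : ↥F, vv r (s f) (j f)) • BB r m (ext s)) x := by
          rw [Finset.sum_apply]; rfl
  rw [key]
  refine Submodule.sum_mem _ fun s _ => Submodule.smul_mem _ _ (Submodule.subset_span ?_)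
  refine ⟨ext s, ?_, rfl⟩
  have hsub : supp r m (ext s) ⊆ F := fun f hf => by
    by_contra hfF
    exact (Finset.mem_filter.mp hf).2 (hextF s f hfF)
  exact hΓ.2.2 F hF.1 _ hsub

lemma bb_mem_span (Γ : Finset (Finset (Fin m))) (s : Fin m → Fin r)
    (hs : supp r m s ∈ Γ) :
    BB r m s ∈ Submodule.span ℚ (Set.range (hierMatrix Γ (fun _ => r))) := by
  obtain ⟨F, hFmem, hFmax⟩ := Finset.exists_maximal
    (s := Γ.filter (fun G => supp r m s ⊆ G)) ⟨supp r m s, Finset.mem_filter.mpr ⟨hs, subset_rfl⟩⟩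
  have hFΓ : F ∈ Γ := (Finset.mem_filter.mp hFmem).1
  have hsF : supp r m s ⊆ F := (Finset.mem_filter.mp hFmem).2
  have hfacet : IsFacet Γ F := by
    refine ⟨hFΓ, fun G hG hFG => ?_⟩
    by_contra hne
    exact hne (le_antisymm (hFmax (Finset.mem_filter.mpr ⟨hG, hsF.trans hFG⟩) hFG) hFG)
  have hs0 : ∀ f, f ∉ F → s f = 0 := by
    intro f hf
    by_contra h
    exact hf (hsF (Finset.mem_filter.mpr ⟨Finset.mem_univ f, h⟩))
  have key : BB r m s = ∑ j : (↥F → Fin r),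
      (∏ f : ↥F, uu r (s f.1) (j f)) • hierMatrix Γ (fun _ => r) ⟨⟨F, hfacet⟩, j⟩ := by
    funext x
    have h1 : ∀ j : (↥F → Fin r),
        ((∏ f : ↥F, uu r (s f.1) (j f)) • hierMatrix Γ (fun _ => r) ⟨⟨F, hfacet⟩, j⟩) x
        = if j = (fun f : ↥F => x f.1) then ∏ f : ↥F, uu r (s f.1) (j f) else 0 := by
      intro j
      rw [Pi.smul_apply, hierMatrix, smul_eq_mul]
      simp only [Matrix.of_apply]
      rw [mul_ite, mul_one, mul_zero]
      congr 1
      simp [funext_iff]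
    rw [Finset.sum_apply]
    refine Eq.trans ?_ (Finset.sum_congr rfl fun j _ => (h1 j).symm)
    rw [Finset.sum_ite_eq']
    simp only [Finset.mem_univ, if_true]
    exact prod_over_facet r m F s x hs0
  rw [key]
  exact Submodule.sum_mem _ fun j _ => Submodule.smul_mem _ _
    (Submodule.subset_span ⟨⟨⟨F, hfacet⟩, j⟩, rfl⟩)

lemma rank_eq_card (Γ : Finset (Finset (Fin m))) (hΓ : IsSimplicialComplex Γ) :
    (hierMatrix Γ (fun _ => r)).rank
      = (univ.filter (fun s : Fin m → Fin r => supp r m s ∈ Γ)).card := by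
  classical
  set T : Finset (Fin m → Fin r) := univ.filter (fun s => supp r m s ∈ Γ) with hT
  have hli : LinearIndependent ℚ (fun s : ↥T => BB r m s.1) :=
    (linIndepB r m).comp Subtype.val Subtype.val_injective
  have him : Set.range (fun s : ↥T => BB r m s.1) = BB r m '' {s | supp r m s ∈ Γ} := by
    ext g
    constructor
    · rintro ⟨⟨s, hs⟩, rfl⟩
      exact ⟨s, (Finset.mem_filter.mp hs).2, rfl⟩
    · rintro ⟨s, hs, rfl⟩
      exact ⟨⟨s, Finset.mem_filter.mpr ⟨Finset.mem_univ s, hs⟩⟩, rfl⟩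
  have hspan : Submodule.span ℚ (Set.range (hierMatrix Γ (fun _ => r)))
      = Submodule.span ℚ (Set.range (fun s : ↥T => BB r m s.1)) := by
    apply le_antisymm
    · rw [Submodule.span_le]
      rintro _ ⟨idx, rfl⟩
      rw [him]
      exact row_mem_span r m Γ hΓ idx
    · rw [Submodule.span_le]
      rintro _ ⟨s, rfl⟩
      refine bb_mem_span r m Γ s.1 ?_
      have := s.2
      simp only [hT, Finset.mem_filter] at this
      exact this.2
  rw [← Matrix.rank_transpose, Matrix.rank, Matrix.range_mulVecLin, Matrix.col_transpose, Matrix.row,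
    hspan, finrank_span_eq_card hli]
  exact Fintype.card_coe T

lemma card_T (Γ : Finset (Finset (Fin m))) :
    (univ.filter (fun s : Fin m → Fin r => supp r m s ∈ Γ)).card
      = ∑ S ∈ Γ, (r - 1) ^ S.card := by
  classical
  set T : Finset (Fin m → Fin r) := univ.filter (fun s => supp r m s ∈ Γ) with hT
  have h1 : ∑ S ∈ Γ, ∑ _s ∈ T.filter (fun s => supp r m s = S), (1:ℕ) = ∑ _s ∈ T, (1:ℕ) :=
    Finset.sum_fiberwise_of_maps_to (fun s hs => (Finset.mem_filter.mp hs).2) _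
  rw [Finset.card_eq_sum_ones, ← h1]
  refine Finset.sum_congr rfl fun S hS => ?_
  rw [← Finset.card_eq_sum_ones]
  have h2 : T.filter (fun s => supp r m s = S)
      = Fintype.piFinset (fun f => if f ∈ S then (univ.erase (0 : Fin r)) else {0}) := by
    ext s
    simp only [hT, Finset.mem_filter, Finset.mem_univ, true_and, Fintype.mem_piFinset]
    constructor
    · rintro ⟨_, hsS⟩ f
      by_cases hfS : f ∈ S
      · have : s f ≠ 0 := by
          have : f ∈ supp r m s := hsS ▸ hfS
          exact (Finset.mem_filter.mp this).2
        simp [hfS, this]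
      · have : s f = 0 := by
          by_contra h
          exact hfS (hsS ▸ (Finset.mem_filter.mpr ⟨Finset.mem_univ f, h⟩))
        simp [hfS, this]
    · intro h
      have hsupp : supp r m s = S := by
        ext f
        have hf := h f
        by_cases hfS : f ∈ S
        · rw [if_pos hfS] at hf
          simp [supp, hfS, Finset.ne_of_mem_erase hf]
        · rw [if_neg hfS, Finset.mem_singleton] at hf
          simp [supp, hfS, hf]
      exact ⟨hsupp ▸ hS, hsupp⟩
  rw [h2, Fintype.card_piFinset]
  have h3 : ∀ f : Fin m, ((if f ∈ S then (univ.erase (0 : Fin r)) else {0}) : Finset (Fin r)).card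
      = if f ∈ S then r - 1 else 1 := by
    intro f
    by_cases hfS : f ∈ S <;>
      simp [hfS, Finset.card_erase_of_mem, Finset.card_univ]
  rw [Finset.prod_congr rfl fun f _ => h3 f,
    ← Finset.prod_subset S.subset_univ (fun f _ hf => if_neg hf),
    Finset.prod_congr rfl (fun f hf => if_pos hf), Finset.prod_const]

end Aux

/-- If all variables have `r` states, then `rank(A_Γ) = E_0 + E_1 r + ⋯ + E_d r^d`,
where `d = dim Γ + 1`, `fv i` is the number of faces of cardinality `i`, and
`E k = ∑_{i=k}^d (-1)^{i-k} f_{i-1} C(i,k)`. -/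
theorem rank_hierMatrix_eq_eVector_poly (m : ℕ) (Γ : Finset (Finset (Fin m)))
    (hΓ : IsSimplicialComplex Γ) (r : ℕ) (hr : 0 < r)
    (d : ℕ) (hd : d = Γ.sup Finset.card)
    (fv : ℕ → ℕ) (hf : ∀ i, fv i = (Γ.filter fun F => F.card = i).card)
    (E : ℕ → ℤ)
    (hE : ∀ k, E k = ∑ i ∈ Finset.Icc k d, (-1 : ℤ) ^ (i - k) * fv i * Nat.choose i k) :
    ((hierMatrix Γ fun _ => r).rank : ℤ)
      = ∑ k ∈ Finset.range (d + 1), E k * (r : ℤ) ^ k := by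
  haveI : NeZero r := ⟨hr.ne'⟩
  rw [rank_eq_card r m Γ hΓ, card_T r m Γ]
  have hcast : ((r - 1 : ℕ) : ℤ) = (r : ℤ) - 1 := by
    rw [Nat.cast_sub hr]; simp
  have step1 : ((∑ S ∈ Γ, (r - 1) ^ S.card : ℕ) : ℤ) = ∑ S ∈ Γ, ((r:ℤ) - 1) ^ S.card := by
    rw [Nat.cast_sum]
    exact Finset.sum_congr rfl fun S _ => by rw [Nat.cast_pow, hcast]
  rw [step1]
  have hmaps : ∀ S ∈ Γ, S.card ∈ Finset.range (d + 1) := fun S hS =>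
    Finset.mem_range.mpr (Nat.lt_succ_of_le (hd ▸ Finset.le_sup hS))
  rw [← Finset.sum_fiberwise_of_maps_to hmaps (fun S => ((r:ℤ) - 1) ^ S.card)]
  have step2 : ∀ i ∈ Finset.range (d + 1),
      ∑ S ∈ Γ.filter (fun S => S.card = i), ((r:ℤ) - 1) ^ S.card
        = (fv i : ℤ) * ((r:ℤ) - 1) ^ i := by
    intro i _
    rw [hf i, Finset.sum_congr rfl (fun S hS => by rw [(Finset.mem_filter.mp hS).2]),
      Finset.sum_const, nsmul_eq_mul]
  rw [Finset.sum_congr rfl step2]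
  have hbin : ∀ i : ℕ, ((r:ℤ) - 1) ^ i
      = ∑ k ∈ Finset.range (i + 1), (r:ℤ) ^ k * (-1) ^ (i - k) * (Nat.choose i k) := by
    intro i
    rw [sub_eq_add_neg, add_pow]
  calc ∑ i ∈ Finset.range (d + 1), (fv i : ℤ) * ((r:ℤ) - 1) ^ i
      = ∑ i ∈ Finset.range (d + 1), ∑ k ∈ Finset.range (i + 1),
          (fv i : ℤ) * ((r:ℤ) ^ k * (-1) ^ (i - k) * (Nat.choose i k)) := by
        refine Finset.sum_congr rfl fun i _ => ?_
        rw [hbin i, Finset.mul_sum]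
    _ = ∑ k ∈ Finset.range (d + 1), ∑ i ∈ Finset.Icc k d,
          (fv i : ℤ) * ((r:ℤ) ^ k * (-1) ^ (i - k) * (Nat.choose i k)) := by
        refine Finset.sum_comm' ?_
        intro i k
        simp only [Finset.mem_range, Finset.mem_Icc]
        omega
    _ = ∑ k ∈ Finset.range (d + 1), E k * (r : ℤ) ^ k := by
        refine Finset.sum_congr rfl fun k _ => ?_
        rw [hE k, Finset.sum_mul]
        exact Finset.sum_congr rfl fun i _ => by ring
end

section
/- Let Γ be an abstract simplicial complex on [m] with d = dim(Γ) + 1 that satisfies the Dehn–Sommerville relations, i.e., its h-vector satisfies h_k = h_{d−k} for all 0 ≤ k ≤ d. Let r be a positive integer and take r_1 = ⋯ = r_m = r. Then rank(A_Γ) = ∑_{i=0}^{d} (−1)^{d−i} f_{i−1} r^i. -/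
open Finset

section LA
variable {m r : ℕ} [NeZero r]

def bvec (u v : Fin r) : ℚ := if u = 0 then 1 else if v = u then 1 else 0

def Bf (j : Fin m → Fin r) : (Fin m → Fin r) → ℚ := fun x => ∏ f, bvec (j f) (x f)

def suppJ (j : Fin m → Fin r) : Finset (Fin m) := univ.filter (fun f => j f ≠ 0)

def coefD (w u : Fin r) : ℚ :=
  if w = 0 then (if u = 0 then 1 else -1) else (if u = w then 1 else 0)

lemma delta_expand (w v : Fin r) :
    (if v = w then (1:ℚ) else 0) = ∑ u, coefD w u * bvec u v := by
  by_cases hw : w = 0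
  · subst hw
    have : ∀ u : Fin r, coefD 0 u * bvec u v
        = (if u = 0 then (1:ℚ) else 0) + (if u = v then (if v = 0 then 0 else -1) else 0) := by
      intro u
      by_cases hu : u = 0 <;> by_cases hv : v = u <;>
        simp_all [coefD, bvec, hu, hv, eq_comm]
    rw [Finset.sum_congr rfl fun u _ => this u, Finset.sum_add_distrib,
      Finset.sum_ite_eq' univ (0 : Fin r), Finset.sum_ite_eq' univ v]
    by_cases hv : v = 0 <;> simp [hv]
  · have : ∀ u : Fin r, coefD w u * bvec u v
        = if u = w then (if v = w then (1:ℚ) else 0) else 0 := by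
      intro u
      by_cases hu : u = w
      · subst hu; simp [coefD, bvec, hw]
      · simp [coefD, bvec, hu, hw]
    rw [Finset.sum_congr rfl fun u _ => this u, Finset.sum_ite_eq']
    simp

lemma one_expand (v : Fin r) :
    (1:ℚ) = ∑ u, (if u = 0 then (1:ℚ) else 0) * bvec u v := by
  rw [Finset.sum_congr rfl (fun u _ => by
    by_cases hu : u = 0 <;> simp [bvec, hu] : ∀ u ∈ univ,
      (if u = 0 then (1:ℚ) else 0) * bvec u v = if u = 0 then 1 else 0)]
  simp [Finset.sum_ite_eq]

/-- expansion of a product of per-coordinate sums into the `Bf` family. -/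

lemma prod_expand (c : Fin m → Fin r → ℚ) (x : Fin m → Fin r) :
    ∏ f, (∑ u, c f u * bvec u (x f))
      = ∑ j : Fin m → Fin r, (∏ f, c f (j f)) * Bf j x := by
  rw [Finset.prod_univ_sum]
  rw [Fintype.piFinset_univ]
  refine Finset.sum_congr rfl fun j _ => ?_
  rw [Bf, ← Finset.prod_mul_distrib]

lemma delta_in_span (y : Fin m → Fin r) :
    (fun x => if x = y then (1:ℚ) else 0)
      = ∑ j : Fin m → Fin r, (∏ f, coefD (y f) (j f)) • Bf j := by
  funext x
  have e1 : (if x = y then (1:ℚ) else 0) = ∏ f, (if x f = y f then (1:ℚ) else 0) := by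
    rw [Finset.prod_boole]
    simp [funext_iff]
  rw [e1, Finset.prod_congr rfl fun f _ => delta_expand (y f) (x f), prod_expand]
  simp [Finset.sum_apply]

lemma top_le_span_Bf :
    (⊤ : Submodule ℚ ((Fin m → Fin r) → ℚ))
      ≤ Submodule.span ℚ (Set.range (Bf (m := m) (r := r))) := by
  rw [← (Pi.basisFun ℚ (Fin m → Fin r)).span_eq]
  refine Submodule.span_le.mpr ?_
  rintro _ ⟨y, rfl⟩
  have hrep : (Pi.basisFun ℚ (Fin m → Fin r)) y
      = ∑ j : Fin m → Fin r, (∏ f, coefD (y f) (j f)) • Bf j := by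
    rw [← delta_in_span]
    funext x
    simp [Pi.basisFun_apply, Pi.single_apply]
  rw [hrep]
  exact Submodule.sum_mem _ fun j _ =>
    Submodule.smul_mem _ _ (Submodule.subset_span ⟨j, rfl⟩)

lemma Bf_indep : LinearIndependent ℚ (Bf (m := m) (r := r)) :=
  linearIndependent_of_top_le_span_of_card_eq_finrank top_le_span_Bf
    (by simp [Module.finrank_pi])

lemma exists_facet {Γ : Finset (Finset (Fin m))} {S : Finset (Fin m)} (hS : S ∈ Γ) :
    ∃ F, IsFacet Γ F ∧ S ⊆ F := by
  obtain ⟨F, hF, hmax⟩ : ∃ F ∈ Γ.filter (S ⊆ ·), ∀ G ∈ Γ.filter (S ⊆ ·), ¬ F < G := by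
    obtain ⟨F, hF, hm⟩ := Finset.exists_maximal (s := Γ.filter (S ⊆ ·)) ⟨S, by simp [hS]⟩
    exact ⟨F, hF, fun G hG hlt => lt_irrefl _ (lt_of_lt_of_le hlt (hm hG hlt.le))⟩
  simp only [mem_filter] at hF
  refine ⟨F, ⟨hF.1, fun G hG hFG => ?_⟩, hF.2⟩
  by_contra hne
  exact hmax G (mem_filter.mpr ⟨hG, hF.2.trans hFG⟩) (lt_of_le_of_ne hFG fun e => hne e.symm)

lemma row_in_span {Γ : Finset (Finset (Fin m))} (hΓ : IsSimplicialComplex Γ)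
    {F : Finset (Fin m)} (hF : F ∈ Γ) (t' : Fin m → Fin r) :
    (fun x : Fin m → Fin r => if ∀ f ∈ F, t' f = x f then (1:ℚ) else 0)
      ∈ Submodule.span ℚ (Bf '' {j : Fin m → Fin r | suppJ j ∈ Γ}) := by
  classical
  set c : Fin m → Fin r → ℚ :=
    fun f u => if f ∈ F then coefD (t' f) u else (if u = 0 then 1 else 0) with hc
  have hrep : (fun x : Fin m → Fin r => if ∀ f ∈ F, t' f = x f then (1:ℚ) else 0)
      = ∑ j : Fin m → Fin r, (∏ f, c f (j f)) • Bf j := by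
    funext x
    have e1 : (if ∀ f ∈ F, t' f = x f then (1:ℚ) else 0)
        = ∏ f, (if f ∈ F then (if x f = t' f then (1:ℚ) else 0) else 1) := by
      by_cases hall : ∀ f ∈ F, t' f = x f
      · rw [if_pos hall]
        refine (Finset.prod_eq_one fun f _ => ?_).symm
        by_cases hf : f ∈ F
        · simp [hf, (hall f hf).symm]
        · simp [hf]
      · rw [if_neg hall]
        push_neg at hall
        obtain ⟨f, hfF, hne⟩ := hall
        refine (Finset.prod_eq_zero (Finset.mem_univ f) ?_).symm
        rw [if_pos hfF, if_neg fun e => hne e.symm]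
    have e2 : ∀ f, (if f ∈ F then (if x f = t' f then (1:ℚ) else 0) else 1)
        = ∑ u, c f u * bvec u (x f) := by
      intro f
      by_cases hf : f ∈ F
      · simp only [hc, hf, if_pos]
        exact delta_expand (t' f) (x f)
      · simp only [hc, hf, if_neg, if_false]
        exact one_expand (x f)
    rw [e1, Finset.prod_congr rfl fun f _ => e2 f, prod_expand]
    simp [Finset.sum_apply]
  rw [hrep]
  refine Submodule.sum_mem _ fun j _ => ?_
  by_cases hj : suppJ j ∈ Γ
  · exact Submodule.smul_mem _ _ (Submodule.subset_span ⟨j, hj, rfl⟩)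
  · have hns : ¬ suppJ j ⊆ F := fun hsub => hj (hΓ.2.2 F hF _ hsub)
    obtain ⟨f, hfs, hfF⟩ := Finset.not_subset.mp hns
    have hjf : j f ≠ 0 := by simpa [suppJ] using hfs
    have : (∏ f, c f (j f)) = 0 :=
      Finset.prod_eq_zero (Finset.mem_univ f) (by simp [hc, hfF, hjf])
    rw [this, zero_smul]
    exact Submodule.zero_mem _

lemma Bf_in_rowspan {Γ : Finset (Finset (Fin m))} (hΓ : IsSimplicialComplex Γ)
    {j : Fin m → Fin r} (hj : suppJ j ∈ Γ) :
    Bf j ∈ Submodule.span ℚ (Set.range (hierMatrix Γ fun _ => r)) := by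
  classical
  obtain ⟨F, hFac, hSF⟩ := exists_facet hj
  have hrep : Bf j = ∑ t : (∀ f : (F : Finset (Fin m)), Fin r),
      (∏ f : (F : Finset (Fin m)), bvec (j f) (t f)) •
        (hierMatrix Γ fun _ => r) ⟨⟨F, hFac⟩, t⟩ := by
    funext x
    have e0 : ∀ t : (∀ f : (F : Finset (Fin m)), Fin r),
        (hierMatrix Γ fun _ => r) ⟨⟨F, hFac⟩, t⟩ x
          = ∏ f : (F : Finset (Fin m)), (if t f = x f then (1:ℚ) else 0) := by
      intro t
      by_cases hall : ∀ f : (F : Finset (Fin m)), t f = x f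
      · rw [hierMatrix]
        rw [if_pos hall]
        exact (Finset.prod_eq_one fun f _ => by simp [hall f]).symm
      · rw [hierMatrix, if_neg hall]
        push_neg at hall
        obtain ⟨f, hne⟩ := hall
        exact (Finset.prod_eq_zero (Finset.mem_univ f) (by rw [if_neg hne])).symm
    simp only [Finset.sum_apply, Pi.smul_apply, smul_eq_mul]
    rw [Finset.sum_congr rfl fun t _ => by rw [e0 t, ← Finset.prod_mul_distrib]]
    rw [← Fintype.piFinset_univ]
    rw [← Finset.prod_univ_sum (fun _ : (F : Finset (Fin m)) => (univ : Finset (Fin r)))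
      (fun f u => bvec (j f.1) u * if u = x f.1 then (1:ℚ) else 0)]
    have e3 : ∀ f : (F : Finset (Fin m)),
        (∑ u : Fin r, bvec (j f) u * (if u = x f then (1:ℚ) else 0))
          = bvec (j f) (x f) := by
      intro f
      rw [Finset.sum_congr rfl fun u _ => by
        rw [mul_ite, mul_one, mul_zero] ]
      simp [Finset.sum_ite_eq']
    rw [Finset.prod_congr rfl fun f _ => e3 f]
    rw [Finset.prod_coe_sort F (fun f => bvec (j f) (x f))]
    rw [Bf, ← Finset.prod_subset (Finset.subset_univ F)
      (fun f _ hfF => by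
        have : j f = 0 := by
          by_contra hne
          exact hfF (hSF (by simp [suppJ, hne]))
        simp [bvec, this])]
  rw [hrep]
  exact Submodule.sum_mem _ fun t _ =>
    Submodule.smul_mem _ _ (Submodule.subset_span ⟨⟨⟨F, hFac⟩, t⟩, rfl⟩)

end LA

section LA3
variable {m r : ℕ} [NeZero r]

lemma span_rows_eq {Γ : Finset (Finset (Fin m))} (hΓ : IsSimplicialComplex Γ) :
    Submodule.span ℚ (Set.range (hierMatrix Γ fun _ => r))
      = Submodule.span ℚ (Bf '' {j : Fin m → Fin r | suppJ j ∈ Γ}) := by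
  apply le_antisymm
  · refine Submodule.span_le.mpr ?_
    rintro _ ⟨⟨⟨F, hF⟩, t⟩, rfl⟩
    set t' : Fin m → Fin r := fun f => if hf : f ∈ F then t ⟨f, hf⟩ else 0 with ht'
    have hrw : (hierMatrix Γ fun _ => r) ⟨⟨F, hF⟩, t⟩
        = fun x => if ∀ f ∈ F, t' f = x f then (1:ℚ) else 0 := by
      funext x
      by_cases hall : ∀ f : (F : Finset (Fin m)), t f = x f
      · rw [hierMatrix, if_pos hall, if_pos]
        intro f hf
        simpa [ht', dif_pos hf] using hall ⟨f, hf⟩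
      · rw [hierMatrix, if_neg hall, if_neg]
        intro hcon
        apply hall
        intro f
        simpa [ht', dif_pos f.2] using hcon f.1 f.2
    rw [hrw]
    exact row_in_span hΓ hF.1 t'
  · refine Submodule.span_le.mpr ?_
    rintro _ ⟨j, hj, rfl⟩
    exact Bf_in_rowspan hΓ hj

lemma rank_eq_card_filter {Γ : Finset (Finset (Fin m))} (hΓ : IsSimplicialComplex Γ) :
    (hierMatrix Γ fun _ => r).rank
      = (univ.filter fun j : Fin m → Fin r => suppJ j ∈ Γ).card := by
  rw [Matrix.rank_eq_finrank_span_row, Matrix.row, span_rows_eq hΓ, Set.image_eq_range]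
  exact (finrank_span_eq_card (Bf_indep.comp _ Subtype.val_injective)).trans
    (by simp [Fintype.card_subtype, Set.mem_setOf_eq])

lemma card_supp_eq (S : Finset (Fin m)) :
    (univ.filter fun j : Fin m → Fin r => suppJ j = S).card = (r-1)^S.card := by
  rw [← Fintype.card_subtype]
  have e : {j : Fin m → Fin r // suppJ j = S}
      ≃ (∀ _f : (S : Finset (Fin m)), {u : Fin r // u ≠ 0}) := by
    refine ⟨fun j f => ⟨j.1 f.1, ?_⟩, fun t => ⟨fun f => if hf : f ∈ S then (t ⟨f, hf⟩).1 else 0, ?_⟩, ?_, ?_⟩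
    · have hf : f.1 ∈ suppJ j.1 := by rw [j.2]; exact f.2
      simpa [suppJ] using hf
    · ext f
      by_cases hf : f ∈ S
      · simp [suppJ, hf, (t ⟨f, hf⟩).2]
      · simp [suppJ, hf]
    · intro j
      apply Subtype.ext
      funext f
      dsimp only
      by_cases hf : f ∈ S
      · rw [dif_pos hf]
      · rw [dif_neg hf]
        have : f ∉ suppJ j.1 := by rw [j.2]; exact hf
        simpa [suppJ, eq_comm] using this
    · intro t
      funext f
      apply Subtype.ext
      dsimp only
      rw [dif_pos f.2]
  rw [Fintype.card_congr e, Fintype.card_pi]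
  have hcard : Fintype.card {u : Fin r // u ≠ 0} = r - 1 := by
    simp [Fintype.card_subtype_compl]
  simp [hcard, Finset.prod_const]

lemma card_filter_mem_eq {Γ : Finset (Finset (Fin m))} :
    (univ.filter fun j : Fin m → Fin r => suppJ j ∈ Γ).card
      = ∑ S ∈ Γ, (r-1)^S.card := by
  rw [Finset.card_eq_sum_ones]
  rw [← Finset.sum_fiberwise_of_maps_to (g := suppJ) (t := Γ)
    (fun j hj => (mem_filter.mp hj).2) (fun _ => 1)]
  refine Finset.sum_congr rfl fun S hS => ?_
  rw [← Finset.card_eq_sum_ones, ← card_supp_eq S]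
  congr 1
  ext j
  simp only [mem_filter, mem_univ, true_and, and_iff_right_iff_imp]
  intro hj
  rw [hj]; exact hS

end LA3

lemma sumG (d : ℕ) (fv : ℕ → ℕ) (h : ℕ → ℤ)
    (hh : ∀ k, h k = ∑ i ∈ Finset.range (k + 1),
        (-1 : ℤ) ^ (k - i) * Nat.choose (d - i) (k - i) * fv i)
    (a c : ℤ) :
    ∑ k ∈ range (d+1), h k * a^k * c^(d-k)
      = ∑ i ∈ range (d+1), (fv i : ℤ) * a^i * (c-a)^(d-i) := by
  have step1 : ∑ k ∈ range (d+1), h k * a^k * c^(d-k)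
      = ∑ k ∈ range (d+1), ∑ i ∈ range (d+1),
          (if i ≤ k then (-1:ℤ)^(k-i) * Nat.choose (d-i) (k-i) * fv i * a^k * c^(d-k) else 0) := by
    refine Finset.sum_congr rfl fun k hk => ?_
    have hkd : k ≤ d := by simpa [Nat.lt_succ_iff] using hk
    have hfil : (range (d+1)).filter (fun i => i ≤ k) = range (k+1) := by
      ext i; simp [Nat.lt_succ_iff]; omega
    rw [hh k, Finset.sum_mul, Finset.sum_mul, ← hfil, Finset.sum_filter]
  rw [step1, Finset.sum_comm]
  refine Finset.sum_congr rfl fun i hi => ?_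
  have hid : i ≤ d := by simpa [Nat.lt_succ_iff] using hi
  have hfil : (range (d+1)).filter (fun k => i ≤ k) = Ico i (d+1) := by
    ext k; simp [Nat.lt_succ_iff]; omega
  rw [← Finset.sum_filter, hfil, Finset.sum_Ico_eq_sum_range]
  have hd1 : d + 1 - i = (d - i) + 1 := by omega
  rw [hd1]
  have hsub : c - a = -a + c := by ring
  rw [hsub, add_pow]
  rw [Finset.mul_sum]
  refine Finset.sum_congr rfl fun l hl => ?_
  have hld : l ≤ d - i := by simpa [Nat.lt_succ_iff] using hl
  have e1 : i + l - i = l := by omega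
  have e2 : d - (i + l) = d - i - l := by omega
  rw [e1, e2, neg_pow]
  ring_nf

lemma keyIdentity (d r : ℕ) (fv : ℕ → ℕ) (h : ℕ → ℤ)
    (hh : ∀ k, h k = ∑ i ∈ Finset.range (k + 1),
        (-1 : ℤ) ^ (k - i) * Nat.choose (d - i) (k - i) * fv i)
    (hDS : ∀ k ≤ d, h k = h (d - k)) :
    ∑ i ∈ range (d+1), (fv i : ℤ) * ((r:ℤ)-1)^i
      = ∑ i ∈ range (d+1), (-1:ℤ)^(d-i) * fv i * (r:ℤ)^i := by
  have A1 := sumG d fv h hh ((r:ℤ)-1) r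
  have A2 := sumG d fv h hh (r:ℤ) ((r:ℤ)-1)
  have e1 : (r:ℤ) - ((r:ℤ)-1) = 1 := by ring
  have e2 : ((r:ℤ)-1) - r = -1 := by ring
  rw [e1] at A1
  rw [e2] at A2
  simp only [one_pow, mul_one] at A1
  have refl : ∑ k ∈ range (d+1), h k * ((r:ℤ)-1)^k * (r:ℤ)^(d-k)
      = ∑ k ∈ range (d+1), h k * (r:ℤ)^k * ((r:ℤ)-1)^(d-k) := by
    rw [← Finset.sum_range_reflect (fun k => h k * (r:ℤ)^k * ((r:ℤ)-1)^(d-k)) (d+1)]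
    refine Finset.sum_congr rfl fun k hk => ?_
    have hkd : k ≤ d := by simpa [Nat.lt_succ_iff] using hk
    have e3 : d + 1 - 1 - k = d - k := by omega
    have e4 : d - (d - k) = k := by omega
    rw [e3, e4, ← hDS k hkd]
    ring
  calc ∑ i ∈ range (d+1), (fv i : ℤ) * ((r:ℤ)-1)^i = _ := A1.symm
    _ = _ := refl
    _ = ∑ i ∈ range (d+1), (fv i:ℤ) * (r:ℤ)^i * (-1:ℤ)^(d-i) := A2
    _ = _ := by refine Finset.sum_congr rfl fun i _ => by ring


/-- If `Γ` satisfies the Dehn–Sommerville relations `h_k = h_{d-k}` (where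
`h_k = ∑_{i=0}^k (-1)^{k-i} C(d-i, k-i) f_{i-1}` and `d = dim Γ + 1`), and all
variables have `r` states, then `rank(A_Γ) = ∑_{i=0}^d (-1)^{d-i} f_{i-1} r^i`. -/
theorem rank_hierMatrix_of_DehnSommerville (m : ℕ) (Γ : Finset (Finset (Fin m)))
    (hΓ : IsSimplicialComplex Γ) (r : ℕ) (hr : 0 < r)
    (d : ℕ) (hd : d = Γ.sup Finset.card)
    (fv : ℕ → ℕ) (hf : ∀ i, fv i = (Γ.filter fun F => F.card = i).card)
    (h : ℕ → ℤ)
    (hh : ∀ k, h k = ∑ i ∈ Finset.range (k + 1),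
        (-1 : ℤ) ^ (k - i) * Nat.choose (d - i) (k - i) * fv i)
    (hDS : ∀ k ≤ d, h k = h (d - k)) :
    ((hierMatrix Γ fun _ => r).rank : ℤ)
      = ∑ i ∈ Finset.range (d + 1), (-1 : ℤ) ^ (d - i) * fv i * (r : ℤ) ^ i := by
  haveI : NeZero r := ⟨hr.ne'⟩
  have hub : ∀ S ∈ Γ, S.card ≤ d := fun S hS => hd ▸ Finset.le_sup hS
  have h1 : (hierMatrix Γ fun _ => r).rank = ∑ i ∈ range (d+1), fv i * (r-1)^i := by
    rw [rank_eq_card_filter hΓ, card_filter_mem_eq]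
    rw [← Finset.sum_fiberwise_of_maps_to (g := Finset.card) (t := range (d+1))
      (fun S hS => mem_range.mpr (Nat.lt_succ_of_le (hub S hS)))
      (fun S => (r-1)^S.card)]
    refine Finset.sum_congr rfl fun i _ => ?_
    have : ∀ S ∈ Γ.filter (fun S => S.card = i), (r-1)^S.card = (r-1)^i := by
      intro S hS
      rw [(mem_filter.mp hS).2]
    rw [Finset.sum_congr rfl this, Finset.sum_const, hf i, smul_eq_mul]
  rw [h1]
  push_cast [Nat.cast_sub hr]
  exact keyIdentity d r fv h hh hDS
end
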